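/- Assume the unknown-input Weierstrass decomposition, unknown-input historical data, and unknown-input persistent excitation hypotheses, and assume the fast subsystem is controllable with the augmented input, i.e. the matrix Q' = [B2, F2, R·B2, R·F2, …, R^{s−1}·B2, R^{s−1}·F2] ∈ ℝ^{n2×(s·(m+q))} has rank n2. Then the (n+p) × (n+q) block matrix [[E, F], [C, 0]] has rank n + q if and only if rank col(X_p, U_p, Y_f) = n + m + q. -/

import Mathlib

/-!
In Weierstrass coordinates the data column `(x(k), u(k), y(k+1))` is a fixed linear function `g`
of `(z₁(k), u(k), η(k), z₂(k+1))`: `x(k) = P (z₁(k), z₂(k))` with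
`z₂(k) = R z₂(k+1) - B₂ u(k) - F₂ η(k)`, and
`y(k+1) = C₁ (A₁ z₁(k) + B₁ u(k) + F₁ η(k)) + C₂ z₂(k+1)`.
As `z₂(k+1) = -Q' (u(k+1), η(k+1), …, u(k+s), η(k+s))` and `Q'` is onto, these vectors are the
image of the persistently exciting columns under a surjective linear map, so the data matrix has
the rank of `g`, which is `n + m + q` iff `g` is injective. Both `g` and the Weierstrass form
`[[I, 0, F₁], [0, R, F₂], [C₁, C₂, 0]]` of `[[E, F], [C, 0]]` are injective iff
`R b + F₂ η = 0` and `C₂ b = C₁ F₁ η` force `b = 0` and `η = 0`.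
-/

open Matrix

noncomputable section

/-- Data matrix of depth `T` whose `k`-th column is `f (k + off)`. -/
def histMat {ι : Type} (T : ℕ) (f : ℕ → ι → ℝ) (off : ℕ) : Matrix ι (Fin T) ℝ :=
  Matrix.of fun i k => f ((k : ℕ) + off) i

/-- A real square matrix is Schur stable if every complex eigenvalue has modulus `< 1`. -/
def SchurStable {n : ℕ} (M : Matrix (Fin n) (Fin n) ℝ) : Prop :=
  ∀ μ ∈ spectrum ℂ (M.map (fun r : ℝ => (r : ℂ))), ‖μ‖ < 1

/-- View a real matrix as a complex matrix. -/
def cmap {a b : Type} (M : Matrix a b ℝ) : Matrix a b ℂ := M.map (fun r => (r : ℂ))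

open Module

section RankLemmas

variable {K : Type*} [Field K]

theorem LinearMap.finrank_range_eq_finrank_iff_ker_eq_bot {V W : Type*} [AddCommGroup V]
    [Module K V] [FiniteDimensional K V] [AddCommGroup W] [Module K W] (f : V →ₗ[K] W) :
    finrank K (LinearMap.range f) = finrank K V ↔ LinearMap.ker f = ⊥ := by
  rw [← f.finrank_range_add_finrank_ker, ← Submodule.finrank_eq_zero]
  omega

theorem Matrix.rank_eq_card_iff_ker_eq_bot {m n : Type*} [Fintype n] (M : Matrix m n K) :
    M.rank = Fintype.card n ↔ LinearMap.ker M.mulVecLin = ⊥ := by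
  rw [← finrank_fintype_fun_eq_card K, ← LinearMap.finrank_range_eq_finrank_iff_ker_eq_bot]
  rfl

theorem Matrix.rank_eq_finrank_range_of_col_eq {ι κ τ : Type*} [Fintype κ] [Fintype τ]
    [DecidableEq τ] {M : Matrix ι τ K} {D : Matrix κ τ K} {g : (κ → K) →ₗ[K] ι → K}
    (hD : D.rank = Fintype.card κ) (hcol : ∀ k, M.col k = g (D.col k)) :
    M.rank = finrank K (LinearMap.range g) := by
  have hfactor : M.mulVecLin = g ∘ₗ D.mulVecLin :=
    LinearMap.pi_ext' fun k => LinearMap.ext_ring <| by simp [hcol]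
  have hD_top : LinearMap.range D.mulVecLin = ⊤ :=
    Submodule.eq_top_of_finrank_eq (by rw [finrank_fintype_fun_eq_card]; exact hD)
  rw [rank, hfactor, LinearMap.range_comp_of_range_eq_top _ hD_top]

end RankLemmas

section BlockMatrices

variable {K : Type*} [CommRing K]

theorem Matrix.rank_fromBlocks_mul_mul {l m n o : Type*} [Fintype l] [Fintype m] [Fintype n]
    [Fintype o] [DecidableEq l] [DecidableEq m] [DecidableEq n] [DecidableEq o]
    (E : Matrix m n K) (F : Matrix m o K) (C : Matrix l n K)
    {S : Matrix m m K} {P : Matrix n n K} (hS : IsUnit S) (hP : IsUnit P) :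
    (fromBlocks (S * E * P) (S * F) (C * P) 0).rank
      = (fromBlocks E F C (0 : Matrix l o K)).rank := by
  have hfactor : fromBlocks (S * E * P) (S * F) (C * P) 0 = fromBlocks S 0 0 (1 : Matrix l l K)
      * fromBlocks E F C 0 * fromBlocks P 0 0 (1 : Matrix o o K) := by
    simp [fromBlocks_multiply]
  rw [hfactor, rank_mul_eq_left_of_isUnit_det, rank_mul_eq_right_of_isUnit_det]
  · simpa [det_fromBlocks_zero₂₁] using (isUnit_iff_isUnit_det S).mp hS
  · simpa [det_fromBlocks_zero₂₁] using (isUnit_iff_isUnit_det P).mp hP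

theorem Matrix.rank_fromBlocks_submatrix {l m n o m' n' : Type*} [Fintype n] [Fintype o]
    [Fintype n'] (E : Matrix m n K) (F : Matrix m o K) (C : Matrix l n K)
    (e₁ : m' ≃ m) (e₂ : n' ≃ n) :
    (fromBlocks (E.submatrix e₁ e₂) (F.submatrix e₁ id) (C.submatrix id e₂) 0).rank
      = (fromBlocks E F C (0 : Matrix l o K)).rank := by
  rw [← rank_submatrix _ (e₁.sumCongr (Equiv.refl l)) (e₂.sumCongr (Equiv.refl o))]
  congr 1
  ext (i | i) (j | j) <;> rfl

theorem Matrix.mulVec_sumElim_comp_symm_of_submatrix {ι : Type*} {n1 n2 : ℕ}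
    {M : Matrix ι (Fin (n1 + n2)) K} {M1 : Matrix ι (Fin n1) K} {M2 : Matrix ι (Fin n2) K}
    (h : M.submatrix id finSumFinEquiv = fromCols M1 M2) (a : Fin n1 → K) (b : Fin n2 → K) :
    M *ᵥ (Sum.elim a b ∘ finSumFinEquiv.symm) = M1 *ᵥ a + M2 *ᵥ b := by
  rw [← fromCols_mulVec_sumElim, ← h]
  ext i
  simp [mulVec, dotProduct, ← finSumFinEquiv.sum_comp]

end BlockMatrices

namespace DescriptorData

variable {K : Type*} {n1 n2 m p q s : ℕ}
  (P : Matrix (Fin (n1 + n2)) (Fin (n1 + n2)) K) (A1 : Matrix (Fin n1) (Fin n1) K)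
  (R : Matrix (Fin n2) (Fin n2) K) (B1 : Matrix (Fin n1) (Fin m) K)
  (B2 : Matrix (Fin n2) (Fin m) K) (F1 : Matrix (Fin n1) (Fin q) K)
  (F2 : Matrix (Fin n2) (Fin q) K) (C1 : Matrix (Fin p) (Fin n1) K)
  (C2 : Matrix (Fin p) (Fin n2) K)

section CommRing

variable [CommRing K]

/-- The matrix `Q' = [B, F, R B, R F, …, R^(s-1) B, R^(s-1) F]`, column `(j, l)` being column `l`
of `[R ^ j * B, R ^ j * F]`. -/
def augmentedCtrb (s : ℕ) (B : Matrix (Fin n2) (Fin m) K) (F : Matrix (Fin n2) (Fin q) K) :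
    Matrix (Fin n2) (Fin s × (Fin m ⊕ Fin q)) K :=
  of fun i jl => fromCols (R ^ (jl.1 : ℕ) * B) (R ^ (jl.1 : ℕ) * F) i jl.2

theorem augmentedCtrb_mulVec_sumElim (u : Fin s → Fin m → K) (η : Fin s → Fin q → K) :
    augmentedCtrb R s B2 F2 *ᵥ (fun jl => Sum.elim (u jl.1) (η jl.1) jl.2)
      = ∑ j : Fin s, R ^ (j : ℕ) *ᵥ (B2 *ᵥ u j + F2 *ᵥ η j) := by
  ext i
  rw [Finset.sum_apply, mulVec, dotProduct, Fintype.sum_prod_type]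
  refine Finset.sum_congr rfl fun j _ => ?_
  change (fromCols (R ^ (j : ℕ) * B2) (R ^ (j : ℕ) * F2) *ᵥ Sum.elim (u j) (η j)) i = _
  rw [fromCols_mulVec_sumElim, ← mulVec_mulVec, ← mulVec_mulVec, mulVec_add]

def fastResponse (s : ℕ) (X : ℕ → Fin n2 → K) (k : ℕ) : Fin n2 → K :=
  -∑ j ∈ Finset.range s, R ^ j *ᵥ X (k + j)

variable {R} in
theorem mulVec_fastResponse_succ (hR : R ^ s = 0) (X : ℕ → Fin n2 → K) (k : ℕ) :
    R *ᵥ fastResponse R s X (k + 1) = fastResponse R s X k + X k := by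
  have hshift : R *ᵥ ∑ j ∈ Finset.range s, R ^ j *ᵥ X (k + 1 + j)
      = ∑ j ∈ Finset.range (s + 1), R ^ j *ᵥ X (k + j) - X k := by
    rw [Finset.sum_range_succ', mulVec_sum]
    simp [mulVec_mulVec, ← pow_succ', add_right_comm, add_assoc]
  rw [Finset.sum_range_succ, hR, zero_mulVec, add_zero] at hshift
  simp only [fastResponse, mulVec_neg, hshift]
  abel

def reduceExcitation (Q : Matrix (Fin n2) (Fin s × (Fin m ⊕ Fin q)) K) :
    (Fin n1 ⊕ (Fin (s + 1) × (Fin m ⊕ Fin q)) → K) →ₗ[K]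
      (Fin n1 → K) × (Fin m → K) × (Fin q → K) × (Fin n2 → K) :=
  (LinearMap.funLeft K K Sum.inl).prod <|
    (LinearMap.funLeft K K fun l => Sum.inr (0, Sum.inl l)).prod <|
      (LinearMap.funLeft K K fun l => Sum.inr (0, Sum.inr l)).prod <|
        -(Q.mulVecLin ∘ₗ LinearMap.funLeft K K fun jl => Sum.inr (jl.1.succ, jl.2))

theorem reduceExcitation_apply (Q : Matrix (Fin n2) (Fin s × (Fin m ⊕ Fin q)) K)
    (w : Fin n1 ⊕ (Fin (s + 1) × (Fin m ⊕ Fin q)) → K) :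
    reduceExcitation Q w = (fun i => w (.inl i), fun l => w (.inr (0, .inl l)),
      fun l => w (.inr (0, .inr l)), -(Q *ᵥ fun jl => w (.inr (jl.1.succ, jl.2)))) :=
  rfl

theorem reduceExcitation_augmentedCtrb (z : Fin n1 → K) (u : ℕ → Fin m → K)
    (η : ℕ → Fin q → K) (k : ℕ) :
    reduceExcitation (augmentedCtrb R s B2 F2)
        (Sum.elim z fun jl => Sum.elim (u (k + jl.1)) (η (k + jl.1)) jl.2)
      = (z, u k, η k, fastResponse R s (fun i => B2 *ᵥ u i + F2 *ᵥ η i) (k + 1)) := by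
  have hfast : augmentedCtrb R s B2 F2 *ᵥ
      (fun jl => Sum.elim (u (k + jl.1.succ)) (η (k + jl.1.succ)) jl.2)
        = -fastResponse R s (fun i => B2 *ᵥ u i + F2 *ᵥ η i) (k + 1) := by
    refine (augmentedCtrb_mulVec_sumElim R B2 F2 (fun j => u (k + j.succ))
      (fun j => η (k + j.succ))).trans ?_
    rw [fastResponse, neg_neg, ← Fin.sum_univ_eq_sum_range]
    exact Fintype.sum_congr _ _ fun j => by rw [Fin.val_succ, ← add_assoc, add_right_comm]
  simp only [reduceExcitation_apply, Sum.elim_inl, Sum.elim_inr, Fin.val_zero, add_zero, hfast,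
    neg_neg]

def dataColumnMap :
    (Fin n1 → K) × (Fin m → K) × (Fin q → K) × (Fin n2 → K) →ₗ[K]
      (Fin (n1 + n2) ⊕ (Fin m ⊕ Fin p) → K) where
  toFun := fun ⟨z, u, η, b⟩ =>
    Sum.elim (P *ᵥ (Sum.elim z (R *ᵥ b - B2 *ᵥ u - F2 *ᵥ η) ∘ finSumFinEquiv.symm))
      (Sum.elim u (C1 *ᵥ (A1 *ᵥ z + B1 *ᵥ u + F1 *ᵥ η) + C2 *ᵥ b))
  map_add' := by
    rintro ⟨z, u, η, b⟩ ⟨z', u', η', b'⟩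
    ext (i | i | i)
    · change (P *ᵥ _) i = (P *ᵥ _ + P *ᵥ _) i
      rw [← mulVec_add]
      congr 1
      funext j
      simp only [Function.comp_apply, Pi.add_apply]
      rcases finSumFinEquiv.symm j with j | j
      · rfl
      · simp only [Sum.elim_inr, mulVec_add, Pi.sub_apply, Pi.add_apply]
        abel
    · rfl
    · simp only [Sum.elim_inr, mulVec_add, Pi.add_apply]
      abel
  map_smul' := by
    rintro c ⟨z, u, η, b⟩
    ext (i | i | i)
    · change (P *ᵥ _) i = (c • P *ᵥ _) i
      rw [← mulVec_smul]
      congr 1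
      funext j
      simp only [Function.comp_apply, Pi.smul_apply]
      rcases finSumFinEquiv.symm j with j | j <;> simp [mulVec_smul, mul_sub]
    · rfl
    · simp [mulVec_smul, mulVec_add, mul_add]

theorem dataColumnMap_apply (z : Fin n1 → K) (u : Fin m → K) (η : Fin q → K)
    (b : Fin n2 → K) :
    dataColumnMap P A1 R B1 B2 F1 F2 C1 C2 (z, u, η, b) =
      Sum.elim (P *ᵥ (Sum.elim z (R *ᵥ b - B2 *ᵥ u - F2 *ᵥ η) ∘ finSumFinEquiv.symm))
        (Sum.elim u (C1 *ᵥ (A1 *ᵥ z + B1 *ᵥ u + F1 *ᵥ η) + C2 *ᵥ b)) :=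
  rfl

variable {P A1 R B1 B2 F1 F2 C1 C2} in
theorem dataColumnMap_apply_of_dynamics {z z' : Fin n1 → K} {w w' : Fin n2 → K}
    {u : Fin m → K} {η : Fin q → K} {x : Fin (n1 + n2) → K} {y' : Fin p → K}
    (hx : x = P *ᵥ (Sum.elim z w ∘ finSumFinEquiv.symm))
    (hslow : z' = A1 *ᵥ z + B1 *ᵥ u + F1 *ᵥ η)
    (hfast : R *ᵥ w' = w + (B2 *ᵥ u + F2 *ᵥ η))
    (hy : y' = C1 *ᵥ z' + C2 *ᵥ w') :
    dataColumnMap P A1 R B1 B2 F1 F2 C1 C2 (z, u, η, w') = Sum.elim x (Sum.elim u y') := by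
  have hw : R *ᵥ w' - B2 *ᵥ u - F2 *ᵥ η = w := by rw [hfast]; abel
  rw [dataColumnMap_apply, hw, hx, hy, hslow]

def weierstrassSystemMatrix :
    Matrix ((Fin n1 ⊕ Fin n2) ⊕ Fin p) ((Fin n1 ⊕ Fin n2) ⊕ Fin q) K :=
  fromBlocks (fromBlocks 1 0 0 R) (fromRows F1 F2) (fromCols C1 C2) 0

theorem weierstrassSystemMatrix_mulVec_sumElim (a : Fin n1 → K) (b : Fin n2 → K)
    (η : Fin q → K) :
    weierstrassSystemMatrix R F1 F2 C1 C2 *ᵥ Sum.elim (Sum.elim a b) η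
      = Sum.elim (Sum.elim (a + F1 *ᵥ η) (R *ᵥ b + F2 *ᵥ η)) (C1 *ᵥ a + C2 *ᵥ b) := by
  simp [weierstrassSystemMatrix, fromBlocks_mulVec, fromRows_mulVec, ← Sum.elim_add_add]

end CommRing

section Field

variable [Field K] {P A1 R B1 B2 F1 F2 C1 C2}

theorem range_reduceExcitation {Q : Matrix (Fin n2) (Fin s × (Fin m ⊕ Fin q)) K}
    (hQ : Q.rank = n2) : LinearMap.range (reduceExcitation (n1 := n1) Q) = ⊤ := by
  have hQ_surj : Function.Surjective Q.mulVecLin := by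
    rw [← LinearMap.range_eq_top]
    exact Submodule.eq_top_of_finrank_eq (by rw [finrank_fin_fun]; exact hQ)
  refine LinearMap.range_eq_top.mpr fun ⟨z, u, η, b⟩ => ?_
  obtain ⟨c, hc⟩ := hQ_surj (-b)
  refine ⟨Sum.elim z fun jl => Fin.cases (Sum.elim u η) (fun j l => c (j, l)) jl.1 jl.2, ?_⟩
  simp [reduceExcitation_apply, show Q *ᵥ c = -b from hc]

theorem ker_dataColumnMap_eq_bot_iff (hP : IsUnit P) :
    LinearMap.ker (dataColumnMap P A1 R B1 B2 F1 F2 C1 C2) = ⊥ ↔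
      LinearMap.ker (weierstrassSystemMatrix R F1 F2 C1 C2).mulVecLin = ⊥ := by
  rw [LinearMap.ker_eq_bot', ker_mulVecLin_eq_bot_iff]
  constructor
  · intro hg v hv
    obtain ⟨a, b, η, rfl⟩ : ∃ a b η, v = Sum.elim (Sum.elim a b) η :=
      ⟨fun i => v (.inl (.inl i)), fun i => v (.inl (.inr i)), fun i => v (.inr i), by
        ext ((i | i) | i) <;> rfl⟩
    simp only [weierstrassSystemMatrix_mulVec_sumElim, ← Sum.elim_zero_zero, Sum.elim_eq_iff]
      at hv ⊢
    obtain ⟨⟨ha, hb⟩, hy⟩ := hv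
    have ha' : a = -(F1 *ᵥ η) := eq_neg_of_add_eq_zero_left ha
    have hfast : R *ᵥ b - B2 *ᵥ 0 - F2 *ᵥ -η = 0 := by simpa [mulVec_neg] using hb
    have hout : C1 *ᵥ (A1 *ᵥ 0 + B1 *ᵥ 0 + F1 *ᵥ -η) + C2 *ᵥ b = 0 := by
      simpa [mulVec_neg, ← ha'] using hy
    have h0 := hg (0, 0, -η, b) (by rw [dataColumnMap_apply, hfast, hout]; simp)
    simp only [Prod.mk_eq_zero, neg_eq_zero] at h0
    simp [ha', h0]
  · rintro hN ⟨z, u, η, b⟩ hv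
    rw [dataColumnMap_apply, ← Sum.elim_zero_zero, Sum.elim_eq_iff, ← Sum.elim_zero_zero,
      Sum.elim_eq_iff] at hv
    obtain ⟨hx, rfl, hy⟩ := hv
    have hzw : Sum.elim z (R *ᵥ b - B2 *ᵥ 0 - F2 *ᵥ η) = 0 := by
      have := mulVec_injective_iff_isUnit.mpr hP (hx.trans (mulVec_zero P).symm)
      simpa [Function.comp_assoc] using congrArg (· ∘ finSumFinEquiv) this
    rw [← Sum.elim_zero_zero, Sum.elim_eq_iff] at hzw
    obtain ⟨rfl, hfast⟩ := hzw
    have h0 := hN (Sum.elim (Sum.elim (F1 *ᵥ η) b) (-η)) (by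
      rw [weierstrassSystemMatrix_mulVec_sumElim]
      simp_all [mulVec_neg, sub_eq_add_neg])
    simp only [← Sum.elim_zero_zero, Sum.elim_eq_iff, neg_eq_zero] at h0
    simp [h0]

theorem finrank_range_dataColumnMap_eq_iff (hP : IsUnit P) :
    finrank K (LinearMap.range (dataColumnMap P A1 R B1 B2 F1 F2 C1 C2)) = n1 + n2 + m + q ↔
      (weierstrassSystemMatrix R F1 F2 C1 C2).rank = n1 + n2 + q := by
  have hdim : n1 + n2 + m + q
      = finrank K ((Fin n1 → K) × (Fin m → K) × (Fin q → K) × (Fin n2 → K)) := by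
    simp only [finrank_prod, finrank_fin_fun]
    ring
  have hcard : n1 + n2 + q = Fintype.card ((Fin n1 ⊕ Fin n2) ⊕ Fin q) := by simp
  rw [hdim, hcard, rank_eq_card_iff_ker_eq_bot, LinearMap.finrank_range_eq_finrank_iff_ker_eq_bot,
    ker_dataColumnMap_eq_bot_iff hP]

end Field

end DescriptorData

open DescriptorData

theorem stmt_18_general (n1 n2 s m p q T : ℕ)
    (E : Matrix (Fin (n1 + n2)) (Fin (n1 + n2)) ℝ)
    (F : Matrix (Fin (n1 + n2)) (Fin q) ℝ)
    (C : Matrix (Fin p) (Fin (n1 + n2)) ℝ)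
    (S P : Matrix (Fin (n1 + n2)) (Fin (n1 + n2)) ℝ)
    (hS : IsUnit S) (hP : IsUnit P)
    (A1 : Matrix (Fin n1) (Fin n1) ℝ) (R : Matrix (Fin n2) (Fin n2) ℝ)
    (B1 : Matrix (Fin n1) (Fin m) ℝ) (B2 : Matrix (Fin n2) (Fin m) ℝ)
    (F1 : Matrix (Fin n1) (Fin q) ℝ) (F2 : Matrix (Fin n2) (Fin q) ℝ)
    (C1 : Matrix (Fin p) (Fin n1) ℝ) (C2 : Matrix (Fin p) (Fin n2) ℝ)
    (hR : R ^ s = 0)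
    (hE : (S * E * P).submatrix ⇑finSumFinEquiv ⇑finSumFinEquiv = Matrix.fromBlocks 1 0 0 R)
    (hFdec : (S * F).submatrix ⇑finSumFinEquiv id = Matrix.fromRows F1 F2)
    (hC : (C * P).submatrix id ⇑finSumFinEquiv = Matrix.fromCols C1 C2)
    (ud : ℕ → Fin m → ℝ) (etad : ℕ → Fin q → ℝ)
    (z1d : ℕ → Fin n1 → ℝ) (z2d : ℕ → Fin n2 → ℝ)
    (xd : ℕ → Fin (n1 + n2) → ℝ) (yd : ℕ → Fin p → ℝ)
    (hz1 : ∀ k < T, z1d (k + 1) = A1 *ᵥ z1d k + B1 *ᵥ ud k + F1 *ᵥ etad k)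
    (hz2 : ∀ k ≤ T, z2d k
      = -(∑ j ∈ Finset.range s, (R ^ j *ᵥ (B2 *ᵥ ud (k + j) + F2 *ᵥ etad (k + j)))))
    (hxd : ∀ k ≤ T, xd k = P *ᵥ (fun i => Sum.elim (z1d k) (z2d k) (finSumFinEquiv.symm i)))
    (hyd : ∀ k ≤ T, yd k = C *ᵥ xd k)
    (hPE : (Matrix.of fun (i : Fin n1 ⊕ (Fin (s + 1) × (Fin m ⊕ Fin q))) (k : Fin T) =>
        Sum.elim (z1d (k : ℕ))
          (fun jl => Sum.elim (ud ((k : ℕ) + (jl.1 : ℕ))) (etad ((k : ℕ) + (jl.1 : ℕ))) jl.2)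
          i).rank = n1 + (s + 1) * (m + q))
    (hQ : (Matrix.of fun (i : Fin n2) (jl : Fin s × (Fin m ⊕ Fin q)) =>
      Sum.elim (fun l => (R ^ (jl.1 : ℕ) * B2) i l)
        (fun l => (R ^ (jl.1 : ℕ) * F2) i l) jl.2).rank = n2) :
    (Matrix.fromBlocks E F C 0).rank = (n1 + n2) + q
      ↔ (Matrix.fromRows (histMat T xd 0)
          (Matrix.fromRows (histMat T ud 0) (histMat T yd 1))).rank
        = (n1 + n2) + m + q := by
  have hsystem : (fromBlocks E F C 0).rank = (weierstrassSystemMatrix R F1 F2 C1 C2).rank := by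
    rw [← rank_fromBlocks_mul_mul E F C hS hP,
      ← rank_fromBlocks_submatrix _ _ _ finSumFinEquiv finSumFinEquiv, hE, hFdec, hC]
    rfl
  have hz2' : ∀ k ≤ T, z2d k = fastResponse R s (fun i => B2 *ᵥ ud i + F2 *ᵥ etad i) k := hz2
  have hdata : (fromRows (histMat T xd 0) (fromRows (histMat T ud 0) (histMat T yd 1))).rank
      = finrank ℝ (LinearMap.range (dataColumnMap P A1 R B1 B2 F1 F2 C1 C2)) := by
    rw [rank_eq_finrank_range_of_col_eq (by rw [hPE]; simp) fun k => ?_,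
      LinearMap.range_comp_of_range_eq_top _
        (range_reduceExcitation (Q := augmentedCtrb R s B2 F2) hQ)]
    have hexc := reduceExcitation_augmentedCtrb (n1 := n1) (s := s) R B2 F2 (z1d k) ud etad k
    rw [← hz2' (k + 1) k.isLt] at hexc
    have hfast : R *ᵥ z2d (k + 1) = z2d k + (B2 *ᵥ ud k + F2 *ᵥ etad k) := by
      rw [hz2' (k + 1) k.isLt, hz2' k k.isLt.le]
      exact mulVec_fastResponse_succ hR _ k
    have hout : yd (k + 1) = C1 *ᵥ z1d (k + 1) + C2 *ᵥ z2d (k + 1) := by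
      rw [hyd _ k.isLt, hxd _ k.isLt, mulVec_mulVec]
      exact mulVec_sumElim_comp_symm_of_submatrix hC _ _
    have hcol := (congrArg (dataColumnMap P A1 R B1 B2 F1 F2 C1 C2) hexc).trans
      (dataColumnMap_apply_of_dynamics (hxd k k.isLt.le) (hz1 k k.isLt) hfast hout)
    ext (i | i | i)
    exacts [(congrFun hcol (.inl i)).symm, (congrFun hcol (.inr (.inl i))).symm,
      (congrFun hcol (.inr (.inr i))).symm]
  rw [hsystem, hdata]
  exact (finrank_range_dataColumnMap_eq_iff hP).symm

theorem stmt_18 (n1 n2 s m p q T : ℕ) (hs : 1 ≤ s) (hT : 1 ≤ T)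
    (E A : Matrix (Fin (n1 + n2)) (Fin (n1 + n2)) ℝ)
    (B : Matrix (Fin (n1 + n2)) (Fin m) ℝ)
    (F : Matrix (Fin (n1 + n2)) (Fin q) ℝ) (hF : F.rank = q)
    (C : Matrix (Fin p) (Fin (n1 + n2)) ℝ)
    (S P : Matrix (Fin (n1 + n2)) (Fin (n1 + n2)) ℝ)
    (hS : IsUnit S) (hP : IsUnit P)
    (A1 : Matrix (Fin n1) (Fin n1) ℝ) (R : Matrix (Fin n2) (Fin n2) ℝ)
    (B1 : Matrix (Fin n1) (Fin m) ℝ) (B2 : Matrix (Fin n2) (Fin m) ℝ)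
    (F1 : Matrix (Fin n1) (Fin q) ℝ) (F2 : Matrix (Fin n2) (Fin q) ℝ)
    (C1 : Matrix (Fin p) (Fin n1) ℝ) (C2 : Matrix (Fin p) (Fin n2) ℝ)
    (hR : R ^ s = 0)
    (hE : (S * E * P).submatrix ⇑finSumFinEquiv ⇑finSumFinEquiv = Matrix.fromBlocks 1 0 0 R)
    (hA : (S * A * P).submatrix ⇑finSumFinEquiv ⇑finSumFinEquiv = Matrix.fromBlocks A1 0 0 1)
    (hB : (S * B).submatrix ⇑finSumFinEquiv id = Matrix.fromRows B1 B2)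
    (hFdec : (S * F).submatrix ⇑finSumFinEquiv id = Matrix.fromRows F1 F2)
    (hC : (C * P).submatrix id ⇑finSumFinEquiv = Matrix.fromCols C1 C2)
    (ud : ℕ → Fin m → ℝ) (etad : ℕ → Fin q → ℝ)
    (z1d : ℕ → Fin n1 → ℝ) (z2d : ℕ → Fin n2 → ℝ)
    (xd : ℕ → Fin (n1 + n2) → ℝ) (yd : ℕ → Fin p → ℝ)
    (hz1 : ∀ k < T, z1d (k + 1) = A1 *ᵥ z1d k + B1 *ᵥ ud k + F1 *ᵥ etad k)
    (hz2 : ∀ k ≤ T, z2d k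
      = -(∑ j ∈ Finset.range s, (R ^ j *ᵥ (B2 *ᵥ ud (k + j) + F2 *ᵥ etad (k + j)))))
    (hxd : ∀ k ≤ T, xd k = P *ᵥ (fun i => Sum.elim (z1d k) (z2d k) (finSumFinEquiv.symm i)))
    (hyd : ∀ k ≤ T, yd k = C *ᵥ xd k)
    (hPE : (Matrix.of fun (i : Fin n1 ⊕ (Fin (s + 1) × (Fin m ⊕ Fin q))) (k : Fin T) =>
        Sum.elim (z1d (k : ℕ))
          (fun jl => Sum.elim (ud ((k : ℕ) + (jl.1 : ℕ))) (etad ((k : ℕ) + (jl.1 : ℕ))) jl.2)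
          i).rank = n1 + (s + 1) * (m + q))
    (hQ : (Matrix.of fun (i : Fin n2) (jl : Fin s × (Fin m ⊕ Fin q)) =>
      Sum.elim (fun l => (R ^ (jl.1 : ℕ) * B2) i l)
        (fun l => (R ^ (jl.1 : ℕ) * F2) i l) jl.2).rank = n2) :
    (Matrix.fromBlocks E F C 0).rank = (n1 + n2) + q
      ↔ (Matrix.fromRows (histMat T xd 0)
          (Matrix.fromRows (histMat T ud 0) (histMat T yd 1))).rank
        = (n1 + n2) + m + q :=
  stmt_18_general n1 n2 s m p q T E F C S P hS hP A1 R B1 B2 F1 F2 C1 C2 hR hE hFdec hC ud etad z1d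
    z2d xd yd hz1 hz2 hxd hyd hPE hQ
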